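/- Let G(x,y,q) = Σ_{n,k≥0} Σ_{π ∈ C_{n,k}} x^n y^k q^{sp(π)}, a well-defined formal power series in ℚ[[x,y,q]]. For each integer a ≥ 1 let A_a = 1 − y²·x^{2a+1}·(q−1)·(1−x)^{−1} ∈ ℚ[[x,y,q]], which has constant term 1 and is invertible. Then G · (1 − Σ_{a≥1} x^a·y·A_a^{−1}) = 1, where the sum over a converges coefficientwise since the a-th summand has x-adic order at least a. Equivalently, G(x,y,q) = 1/(1 − Σ_{a≥1} x^a y/(1 − y²x^{2a+1}(q−1)/(1−x))). -/

import Mathlib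

/-- The indices (0-based) of symmetric peaks of a list of naturals:
`i` is a symmetric peak if `L i < L (i+1)` and `L i = L (i+2)`. -/
def symPeakIdx (L : List ℕ) : Finset ℕ :=
  (Finset.range L.length).filter (fun i =>
    i + 2 < L.length ∧ L.getD i 0 < L.getD (i+1) 0 ∧ L.getD i 0 = L.getD (i+2) 0)

/-- `sp π`: the number of symmetric peaks of `π`. -/
def spL (L : List ℕ) : ℕ := (symPeakIdx L).card

/-- Variables: `X 0 = x`, `X 1 = y`, `X 2 = q`. -/
noncomputable abbrev Xv : Fin 3 → MvPowerSeries (Fin 3) ℚ := MvPowerSeries.X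

/-- `G(x,y,q) = Σ_{n,k≥0} Σ_{π ∈ C_{n,k}} x^n y^k q^{sp(π)}`, defined coefficientwise. -/
noncomputable def Gsp : MvPowerSeries (Fin 3) ℚ := fun m =>
  ((Finset.univ : Finset (Composition (m 0))).filter (fun c =>
    c.length = m 1 ∧ spL c.blocks = m 2)).card

/-- `A_a = 1 − y²·x^{2a+1}·(q−1)·(1−x)⁻¹`. -/
noncomputable def Asp (a : ℕ) : MvPowerSeries (Fin 3) ℚ :=
  1 - (Xv 1)^2 * (Xv 0)^(2*a+1) * (Xv 2 - 1) * (1 - Xv 0)⁻¹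

/-- `Σ_{a≥1} x^a·y·A_a⁻¹`, defined coefficientwise: since the `a`-th summand has `x`-adic
order at least `a`, only the terms with `1 ≤ a ≤ m 0` contribute to the coefficient of a
monomial `m`. -/
noncomputable def Ssp : MvPowerSeries (Fin 3) ℚ := fun m =>
  ∑ a ∈ Finset.Icc 1 (m 0), MvPowerSeries.coeff m ((Xv 0)^a * Xv 1 * (Asp a)⁻¹)

/-!
Write `G_a` for the generating function of the compositions with first part `a`, so that
`G = 1 + Σ_{a ≥ 1} G_a`. Prepending `a` to a composition `τ` multiplies its weight by `x^a y`, and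
also by `q` exactly when `τ = (b, a, …)` with `b > a`. With `D_a` the generating function of these
`τ`, this gives `G_a = x^a y (G + (q - 1) D_a)`. Raising the first part of such a `τ` by one is a
bijection onto those with first part at least `a + 2`, so `(1 - x) D_a = x^{a+1} y G_a`.
Eliminating `D_a` gives `A_a G_a = x^a y G`, that is `G · x^a y A_a⁻¹ = G_a`, and then
`G (1 - Σ_a x^a y A_a⁻¹) = G - Σ_a G_a = 1`.
-/

open MvPowerSeries

namespace MvPowerSeries

variable {σ R : Type*} [Semiring R]

theorem coeff_X_pow_mul_of_lt {i : σ} {a : ℕ} {m : σ →₀ ℕ} (h : m i < a)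
    (φ : MvPowerSeries σ R) : coeff m (X i ^ a * φ) = 0 := by
  rw [X_pow_eq, coeff_monomial_mul, if_neg]
  intro hle
  have := hle i
  simp only [Finsupp.single_eq_same] at this
  omega

theorem coeff_mul_eq_sum_of_coeff_eq_sum {i : σ} {k : ℕ} {F : ℕ → MvPowerSeries σ R}
    (hF : ∀ a m, m i < a → coeff m (F a) = 0) {S : MvPowerSeries σ R}
    (hS : ∀ m, coeff m S = ∑ a ∈ Finset.Icc k (m i), coeff m (F a))
    (G : MvPowerSeries σ R) (m : σ →₀ ℕ) :
    coeff m (G * S) = ∑ a ∈ Finset.Icc k (m i), coeff m (G * F a) := by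
  classical
  simp only [coeff_mul]
  rw [Finset.sum_comm]
  refine Finset.sum_congr rfl fun p hp => ?_
  have hle : p.2 i ≤ m i := by
    rw [← Finset.HasAntidiagonal.mem_antidiagonal.1 hp, Finsupp.add_apply]
    exact le_add_self
  rw [hS, Finset.mul_sum]
  refine Finset.sum_subset (Finset.Icc_subset_Icc_right hle) fun a ha ha' => ?_
  rw [hF a p.2 (by simp only [Finset.mem_Icc] at ha ha'; omega), mul_zero]

end MvPowerSeries

namespace SymmetricPeaks

open Finset in
theorem spL_cons_cons_cons (a b c : ℕ) (R : List ℕ) :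
    spL (a :: b :: c :: R) = spL (b :: c :: R) + if a < b ∧ a = c then 1 else 0 := by
  simp only [spL, symPeakIdx, card_filter, List.length_cons]
  rw [sum_range_succ']
  congr 1
  · refine sum_congr rfl fun i _ => ?_
    simp only [List.getD_cons_succ]
    congr 1
    simp only [Nat.add_lt_add_iff_right]
  · simp

theorem spL_eq_zero_of_length_le_two {L : List ℕ} (h : L.length ≤ 2) : spL L = 0 := by
  simp only [spL, symPeakIdx, Finset.card_eq_zero, Finset.filter_eq_empty_iff]
  omega

theorem spL_cons_cons_of_le {a b : ℕ} (h : a ≤ b) (R : List ℕ) :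
    spL (b :: a :: R) = spL (a :: R) := by
  cases R with
  | nil => simp [spL_eq_zero_of_length_le_two]
  | cons c R => rw [spL_cons_cons_cons, if_neg (by omega), add_zero]

def compositionLists : Set (List ℕ) := {L | ∀ i ∈ L, 0 < i}

noncomputable def weight (L : List ℕ) : Fin 3 →₀ ℕ :=
  Finsupp.single 0 L.sum + Finsupp.single 1 L.length + Finsupp.single 2 (spL L)

/-- Fibres of `weight` are finite only inside `compositionLists`; on an infinite fibre `Set.ncard`
gives the junk value `0`. -/
noncomputable def weightGF (S : Set (List ℕ)) : MvPowerSeries (Fin 3) ℚ :=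
  fun m => ({L ∈ S | weight L = m}.ncard : ℚ)

theorem coeff_weightGF (S : Set (List ℕ)) (m : Fin 3 →₀ ℕ) :
    coeff m (weightGF S) = {L ∈ S | weight L = m}.ncard := rfl

theorem weight_eq_iff {L : List ℕ} {m : Fin 3 →₀ ℕ} :
    weight L = m ↔ L.sum = m 0 ∧ L.length = m 1 ∧ spL L = m 2 := by
  constructor
  · rintro rfl
    simp [weight]
  · rintro ⟨h0, h1, h2⟩
    ext i
    fin_cases i <;> simp [weight, h0, h1, h2]

theorem Gsp_eq_weightGF : Gsp = weightGF compositionLists := by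
  ext m
  have hfiber : {L ∈ compositionLists | weight L = m} = Composition.blocks ''
      ((Finset.univ.filter fun c : Composition (m 0) => c.length = m 1 ∧ spL c.blocks = m 2 :
        Finset _) : Set (Composition (m 0))) := by
    ext L
    simp only [compositionLists, weight_eq_iff, Set.mem_ofPred_eq, Finset.coe_filter,
      Finset.mem_univ, true_and, Set.mem_image]
    constructor
    · rintro ⟨hpos, hsum, hlen, hsp⟩
      exact ⟨⟨L, hpos _, hsum⟩, ⟨hlen, hsp⟩, rfl⟩
    · rintro ⟨c, ⟨hlen, hsp⟩, rfl⟩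
      exact ⟨fun _ => c.blocks_pos, c.blocks_sum, hlen, hsp⟩
  rw [coeff_weightGF, hfiber, Set.InjOn.ncard_image (fun _ _ _ _ h => Composition.ext h),
    Set.ncard_coe_finset]
  rfl

theorem finite_weight_fiber {S : Set (List ℕ)} (hS : S ⊆ compositionLists) (m : Fin 3 →₀ ℕ) :
    {L ∈ S | weight L = m}.Finite :=
  (Set.finite_range (Composition.blocks (n := m 0))).subset fun L ⟨hL, hw⟩ =>
    ⟨⟨L, hS hL _, (weight_eq_iff.1 hw).1⟩, rfl⟩

theorem weightGF_union {S T : Set (List ℕ)} (hS : S ⊆ compositionLists)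
    (hT : T ⊆ compositionLists) (hST : Disjoint S T) :
    weightGF (S ∪ T) = weightGF S + weightGF T := by
  ext m
  rw [map_add, coeff_weightGF, coeff_weightGF, coeff_weightGF,
    show {L ∈ S ∪ T | weight L = m} = _ from Set.sep_union,
    Set.ncard_union_eq (hST.mono (Set.sep_subset _ _) (Set.sep_subset _ _))
      (finite_weight_fiber hS m) (finite_weight_fiber hT m), Nat.cast_add]

theorem weightGF_image {S : Set (List ℕ)} {f : List ℕ → List ℕ} (e : Fin 3 →₀ ℕ)
    (hf : Set.InjOn f S) (hw : ∀ T ∈ S, weight (f T) = weight T + e) :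
    weightGF (f '' S) = monomial e 1 * weightGF S := by
  ext m
  have hfiber : {L ∈ f '' S | weight L = m} = f '' {T ∈ S | weight T + e = m} := by
    ext L
    simp only [Set.mem_ofPred_eq, Set.mem_image]
    constructor
    · rintro ⟨⟨T, hT, rfl⟩, hm⟩
      exact ⟨T, ⟨hT, hw T hT ▸ hm⟩, rfl⟩
    · rintro ⟨T, ⟨hT, hm⟩, rfl⟩
      exact ⟨⟨T, hT, rfl⟩, hw T hT ▸ hm⟩
  rw [coeff_weightGF, hfiber, (hf.mono (Set.sep_subset _ _)).ncard_image, coeff_monomial_mul,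
    one_mul]
  split_ifs with he
  · simp only [coeff_weightGF, ← eq_tsub_iff_add_eq_of_le he]
  · rw [Set.sep_eq_empty_iff_mem_false.2 fun T _ (hm : weight T + e = m) => he (hm ▸ le_add_self),
      Set.ncard_empty, Nat.cast_zero]

theorem weightGF_singleton_nil : weightGF {[]} = 1 := by
  ext m
  have hw : weight [] = 0 := by simp [weight, spL_eq_zero_of_length_le_two]
  rw [coeff_weightGF, coeff_one]
  split_ifs with hm
  · rw [Set.sep_eq_self_iff_mem_true.2 (by simp [hw, hm]), Set.ncard_singleton, Nat.cast_one]
  · rw [Set.sep_eq_empty_iff_mem_false.2 (by simp [hw, Ne.symm hm]), Set.ncard_empty,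
      Nat.cast_zero]

def peakTails (a : ℕ) : Set (List ℕ) := {T | ∃ b R, a < b ∧ T = b :: a :: R}

theorem spL_cons_of_mem_peakTails {a : ℕ} {T : List ℕ} (hT : T ∈ peakTails a) :
    spL (a :: T) = spL T + 1 := by
  obtain ⟨b, R, hab, rfl⟩ := hT
  rw [spL_cons_cons_cons, if_pos ⟨hab, rfl⟩]

theorem spL_cons_of_notMem_peakTails {a : ℕ} {T : List ℕ} (hT : T ∉ peakTails a) :
    spL (a :: T) = spL T := by
  match T with
  | [] | [_] => simp [spL_eq_zero_of_length_le_two]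
  | b :: c :: R =>
    rw [spL_cons_cons_cons, if_neg, add_zero]
    rintro ⟨hab, rfl⟩
    exact hT ⟨b, R, hab, rfl⟩

theorem cons_mem_compositionLists {a : ℕ} {T : List ℕ} :
    a :: T ∈ compositionLists ↔ 0 < a ∧ T ∈ compositionLists :=
  List.forall_mem_cons

theorem weight_cons {a c : ℕ} {T : List ℕ} (h : spL (a :: T) = spL T + c) :
    weight (a :: T) =
      weight T + (Finsupp.single 0 a + Finsupp.single 1 1 + Finsupp.single 2 c) := by
  simp only [weight, List.sum_cons, List.length_cons, h, Finsupp.single_add]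
  abel

theorem weightGF_cons {a : ℕ} (c : ℕ) {S : Set (List ℕ)}
    (hS : ∀ T ∈ S, spL (a :: T) = spL T + c) :
    weightGF ((a :: ·) '' S) = X 0 ^ a * X 1 * X 2 ^ c * weightGF S := by
  rw [weightGF_image _ List.cons_injective.injOn fun T hT => weight_cons (hS T hT), X_pow_eq,
    X_pow_eq, ← pow_one (X 1), X_pow_eq, monomial_mul_monomial, monomial_mul_monomial,
    one_mul, one_mul]

def startingWith (a : ℕ) : Set (List ℕ) := (a :: ·) '' compositionLists

theorem startingWith_subset {a : ℕ} (ha : 0 < a) : startingWith a ⊆ compositionLists := by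
  rintro _ ⟨T, hT, rfl⟩
  exact cons_mem_compositionLists.2 ⟨ha, hT⟩

theorem weightGF_startingWith {a : ℕ} (ha : 0 < a) :
    weightGF (startingWith a) =
      X 0 ^ a * X 1 * (Gsp - weightGF (compositionLists ∩ peakTails a)) +
        X 0 ^ a * X 1 * X 2 * weightGF (compositionLists ∩ peakTails a) := by
  have hsplit : startingWith a = (a :: ·) '' (compositionLists \ peakTails a) ∪
      (a :: ·) '' (compositionLists ∩ peakTails a) := by
    rw [← Set.image_union, Set.sdiff_union_inter, startingWith]
  have hG : Gsp = weightGF (compositionLists \ peakTails a) +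
      weightGF (compositionLists ∩ peakTails a) := by
    rw [← weightGF_union Set.sdiff_subset Set.inter_subset_left Set.disjoint_sdiff_inter,
      Set.sdiff_union_inter, Gsp_eq_weightGF]
  rw [hsplit, weightGF_union ((Set.image_mono Set.sdiff_subset).trans (startingWith_subset ha))
      ((Set.image_mono Set.inter_subset_left).trans (startingWith_subset ha))
      ((Set.disjoint_image_iff List.cons_injective).2 Set.disjoint_sdiff_inter),
    weightGF_cons 0 fun T hT => spL_cons_of_notMem_peakTails hT.2,
    weightGF_cons 1 fun T hT => spL_cons_of_mem_peakTails hT.2, hG]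
  ring

theorem compositionLists_inter_peakTails {a : ℕ} (ha : 0 < a) :
    compositionLists ∩ peakTails a = ((a + 1) :: ·) '' startingWith a ∪
      List.modifyHead (· + 1) '' (compositionLists ∩ peakTails a) := by
  ext L
  constructor
  · rintro ⟨hL, b, R, hab, rfl⟩
    obtain ⟨-, hR⟩ := cons_mem_compositionLists.1 hL
    obtain rfl | ⟨c, hac, rfl⟩ : b = a + 1 ∨ ∃ c, a < c ∧ b = c + 1 :=
      (Nat.succ_le_of_lt hab).eq_or_lt.imp Eq.symm fun h => ⟨b - 1, by omega, by omega⟩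
    · exact Or.inl ⟨a :: R, ⟨R, (cons_mem_compositionLists.1 hR).2, rfl⟩, rfl⟩
    · exact Or.inr ⟨c :: a :: R, ⟨cons_mem_compositionLists.2 ⟨by omega, hR⟩, c, R, hac, rfl⟩,
        rfl⟩
  · rintro (⟨_, ⟨R, hR, rfl⟩, rfl⟩ | ⟨_, ⟨hT, b, R, hab, rfl⟩, rfl⟩)
    · exact ⟨cons_mem_compositionLists.2 ⟨a.succ_pos, cons_mem_compositionLists.2 ⟨ha, hR⟩⟩,
        a + 1, R, a.lt_succ_self, rfl⟩
    · exact ⟨cons_mem_compositionLists.2 ⟨b.succ_pos, (cons_mem_compositionLists.1 hT).2⟩,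
        b + 1, R, by omega, rfl⟩

theorem one_sub_X_mul_weightGF_peakTails {a : ℕ} (ha : 0 < a) :
    (1 - X 0) * weightGF (compositionLists ∩ peakTails a) =
      X 0 ^ (a + 1) * X 1 * weightGF (startingWith a) := by
  have hdisj : Disjoint (((a + 1) :: ·) '' startingWith a)
      (List.modifyHead (· + 1) '' (compositionLists ∩ peakTails a)) := by
    rw [Set.disjoint_left]
    rintro _ ⟨_, ⟨R, -, rfl⟩, rfl⟩ ⟨_, ⟨-, b, R', hab, rfl⟩, h⟩
    simp only [List.modifyHead_cons, List.cons.injEq] at h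
    omega
  have hinj : Set.InjOn (List.modifyHead (· + 1)) (compositionLists ∩ peakTails a) := by
    rintro _ ⟨-, b, R, -, rfl⟩ _ ⟨-, b', R', -, rfl⟩ h
    simpa using h
  have hshift : ∀ T ∈ compositionLists ∩ peakTails a,
      weight (List.modifyHead (· + 1) T) = weight T + Finsupp.single 0 1 := by
    rintro _ ⟨-, b, R, hab, rfl⟩
    simp only [weight, List.modifyHead_cons, List.sum_cons, List.length_cons,
      spL_cons_cons_of_le hab.le, spL_cons_cons_of_le (hab.le.trans b.le_succ), Finsupp.single_add]
    abel
  have hsplit := compositionLists_inter_peakTails ha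
  have hsub : _ ⊆ compositionLists := hsplit.symm.subset.trans Set.inter_subset_left
  have h := congrArg weightGF hsplit
  rw [weightGF_union (Set.subset_union_left.trans hsub) (Set.subset_union_right.trans hsub) hdisj,
    weightGF_cons 0 fun T (hT : T ∈ startingWith a) => by
      obtain ⟨R, -, rfl⟩ := hT
      rw [spL_cons_cons_of_le a.le_succ, add_zero],
    weightGF_image _ hinj hshift, ← X] at h
  linear_combination h

theorem Asp_mul_weightGF_startingWith {a : ℕ} (ha : 0 < a) :
    Asp a * weightGF (startingWith a) = X 0 ^ a * X 1 * Gsp := by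
  have hinv : (1 - X 0) * (1 - X 0 : MvPowerSeries (Fin 3) ℚ)⁻¹ = 1 :=
    MvPowerSeries.mul_inv_cancel _ (by simp)
  have hD : weightGF (compositionLists ∩ peakTails a) =
      (1 - X 0)⁻¹ * (X 0 ^ (a + 1) * X 1 * weightGF (startingWith a)) := by
    rw [← one_sub_X_mul_weightGF_peakTails ha, ← mul_assoc, mul_comm _⁻¹, hinv, one_mul]
  rw [Asp]
  linear_combination weightGF_startingWith ha + X 0 ^ a * X 1 * (X 2 - 1) * hD

theorem Gsp_mul_eq_weightGF_startingWith {a : ℕ} (ha : 0 < a) :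
    Gsp * (X 0 ^ a * X 1 * (Asp a)⁻¹) = weightGF (startingWith a) := by
  have hinv : Asp a * (Asp a)⁻¹ = 1 := MvPowerSeries.mul_inv_cancel _ (by simp [Asp])
  calc Gsp * (X 0 ^ a * X 1 * (Asp a)⁻¹) = X 0 ^ a * X 1 * Gsp * (Asp a)⁻¹ := by ring
    _ = weightGF (startingWith a) := by
      rw [← Asp_mul_weightGF_startingWith ha, mul_comm (Asp a), mul_assoc, hinv, mul_one]

theorem compositionLists_weight_fiber (m : Fin 3 →₀ ℕ) :
    {L ∈ compositionLists | weight L = m} = {L ∈ ({[]} : Set (List ℕ)) | weight L = m} ∪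
      ⋃ a ∈ (Finset.Icc 1 (m 0) : Set ℕ), {L ∈ startingWith a | weight L = m} := by
  ext L
  simp only [Set.mem_union, Set.mem_iUnion, Set.mem_ofPred_eq, Set.mem_singleton_iff,
    Finset.coe_Icc, Set.mem_Icc, exists_prop]
  constructor
  · rintro ⟨hL, hw⟩
    cases L with
    | nil => exact Or.inl ⟨rfl, hw⟩
    | cons a T =>
      obtain ⟨ha, hT⟩ := cons_mem_compositionLists.1 hL
      refine Or.inr ⟨a, ⟨ha, ?_⟩, ⟨T, hT, rfl⟩, hw⟩
      rw [← (weight_eq_iff.1 hw).1, List.sum_cons]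
      exact Nat.le_add_right _ _
  · rintro (⟨rfl, hw⟩ | ⟨a, ⟨ha, -⟩, hL, hw⟩)
    · exact ⟨List.forall_mem_nil _, hw⟩
    · exact ⟨startingWith_subset ha hL, hw⟩

theorem coeff_Gsp_eq_coeff_one_add_sum (m : Fin 3 →₀ ℕ) :
    coeff m Gsp = coeff m 1 + ∑ a ∈ Finset.Icc 1 (m 0), coeff m (weightGF (startingWith a)) := by
  have hnil : {[]} ⊆ compositionLists := by simp [compositionLists]
  have hdisj : Set.PairwiseDisjoint (Finset.Icc 1 (m 0) : Set ℕ)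
      fun a => {L ∈ startingWith a | weight L = m} := by
    intro a _ b _ hab
    rw [Function.onFun, Set.disjoint_left]
    rintro _ ⟨⟨T, -, rfl⟩, -⟩ ⟨⟨T', -, h⟩, -⟩
    exact hab (List.cons.inj h).1.symm
  have hfin : ∀ a ∈ (Finset.Icc 1 (m 0) : Set ℕ), {L ∈ startingWith a | weight L = m}.Finite :=
    fun a ha => finite_weight_fiber (startingWith_subset (Finset.mem_Icc.1 ha).1) m
  rw [Gsp_eq_weightGF, coeff_weightGF, compositionLists_weight_fiber,
    Set.ncard_union_eq ?_ (finite_weight_fiber hnil m) ((Set.toFinite _).biUnion hfin),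
    (Set.toFinite _).ncard_biUnion hfin hdisj, finsum_mem_coe_finset, ← weightGF_singleton_nil]
  · push_cast
    rfl
  · rw [Set.disjoint_left]
    rintro _ ⟨rfl, -⟩ h
    simp [startingWith] at h

end SymmetricPeaks

open SymmetricPeaks

/-- `G·(1 − Σ_{a≥1} x^a y A_a⁻¹) = 1`, i.e.
`G(x,y,q) = 1/(1 − Σ_{a≥1} x^a y/(1 − y²x^{2a+1}(q−1)/(1−x)))`. -/
theorem sp_generating_function : Gsp * (1 - Ssp) = 1 := by
  ext m
  have hGS : coeff m (Gsp * Ssp) =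
      ∑ a ∈ Finset.Icc 1 (m 0), coeff m (weightGF (startingWith a)) := by
    rw [coeff_mul_eq_sum_of_coeff_eq_sum (i := 0) (S := Ssp)
      (F := fun a => X 0 ^ a * X 1 * (Asp a)⁻¹)
      (fun a m h => by rw [mul_assoc]; exact coeff_X_pow_mul_of_lt h _) (fun _ => rfl)]
    refine Finset.sum_congr rfl fun a ha => ?_
    rw [Gsp_mul_eq_weightGF_startingWith (Finset.mem_Icc.1 ha).1]
  rw [mul_sub, mul_one, map_sub, hGS, coeff_Gsp_eq_coeff_one_add_sum, add_sub_cancel_right]
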